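/- arXiv:1102.0666 — 2 statements merged into one kernel-verified Lean document; each statement's English description precedes it below -/
import Mathlib

section
/- Let L ⊆ Σ* and 0 ≤ ε < 1/2. Then L is recognized with error bound ε by some RT-QFA↻ if and only if L is recognized with error bound ε by some RT-PostQFA. In particular, the class of languages recognized by RT-QFA↻s with bounded error equals PostQAL. -/
noncomputable section

/-- The input alphabet extended with the two endmarkers `¢` and `$`. -/
inductive ESym (α : Type) : Type where
  | cent : ESym α
  | dollar : ESym α
  | letter : α → ESym α

/-- The diagonal 0-1 projection matrix supported on a set of states. -/
def projM {m : ℕ} (S : Finset (Fin m)) : Matrix (Fin m) (Fin m) ℂ :=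
  Matrix.diagonal (fun i => if i ∈ S then 1 else 0)

/-- The density matrix obtained by applying, in order, the Kraus families for
`¢`, the letters of `w`, and `$` to the initial density matrix `|q₁⟩⟨q₁|`. -/
def qRun {α : Type} {n : ℕ} {k : ESym α → ℕ}
    (E : ∀ σ : ESym α, Fin (k σ) → Matrix (Fin (n + 1)) (Fin (n + 1)) ℂ)
    (w : List α) : Matrix (Fin (n + 1)) (Fin (n + 1)) ℂ :=
  (ESym.cent :: (w.map ESym.letter ++ [ESym.dollar])).foldl
    (fun ρ σ => ∑ i : Fin (k σ), E σ i * ρ * (E σ i).conjTranspose)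
    (Matrix.single 0 0 1)

/-- A real-time quantum finite automaton with postselection (RT-PostQFA). -/
structure PostQFA (α : Type) where
  n : ℕ
  k : ESym α → ℕ
  E : ∀ σ : ESym α, Fin (k σ) → Matrix (Fin (n + 1)) (Fin (n + 1)) ℂ
  kraus : ∀ σ : ESym α, ∑ i : Fin (k σ), (E σ i).conjTranspose * E σ i = 1
  Qpa : Finset (Fin (n + 1))
  Qpr : Finset (Fin (n + 1))
  disj : Disjoint Qpa Qpr
  postPos : ∀ w : List α,
    0 < ((projM Qpa * qRun E w).trace).re + ((projM Qpr * qRun E w).trace).re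

/-- Acceptance probability before postselection. -/
def PostQFA.pacc {α : Type} (M : PostQFA α) (w : List α) : ℝ :=
  ((projM M.Qpa * qRun M.E w).trace).re

/-- Rejection probability before postselection. -/
def PostQFA.prej {α : Type} (M : PostQFA α) (w : List α) : ℝ :=
  ((projM M.Qpr * qRun M.E w).trace).re

/-- Normalized acceptance probability of an RT-PostQFA. -/
def PostQFA.fa {α : Type} (M : PostQFA α) (w : List α) : ℝ :=
  M.pacc w / (M.pacc w + M.prej w)

/-- Recognition of a language with error bound `ε`. -/
def PostQFA.Recognizes {α : Type} (M : PostQFA α) (L : Set (List α)) (ε : ℝ) : Prop :=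
  ∀ w : List α, (w ∈ L → 1 - ε ≤ M.fa w) ∧ (w ∉ L → M.fa w ≤ ε)

/-- The class of languages recognized by RT-PostQFAs with bounded error. -/
def PostQAL {α : Type} (L : Set (List α)) : Prop :=
  ∃ (M : PostQFA α) (ε : ℝ), 0 ≤ ε ∧ ε < 1 / 2 ∧ M.Recognizes L ε

/-- Recognition with zero error: `fa = 1` on members, `fa = 0` on non-members. -/
def PostQFA.RecognizesZero {α : Type} (M : PostQFA α) (L : Set (List α)) : Prop :=
  ∀ w : List α, (w ∈ L → M.fa w = 1) ∧ (w ∉ L → M.fa w = 0)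

/-- The class of languages recognized by RT-PostQFAs with zero error. -/
def ZPostQAL {α : Type} (L : Set (List α)) : Prop :=
  ∃ M : PostQFA α, M.RecognizesZero L

/-- A real-time quantum finite automaton with restart (RT-QFA↻),
restarting only at the right end of the input. -/
structure RestartQFA (α : Type) where
  n : ℕ
  k : ESym α → ℕ
  E : ∀ σ : ESym α, Fin (k σ) → Matrix (Fin (n + 1)) (Fin (n + 1)) ℂ
  kraus : ∀ σ : ESym α, ∑ i : Fin (k σ), (E σ i).conjTranspose * E σ i = 1
  Qa : Finset (Fin (n + 1))
  Qr : Finset (Fin (n + 1))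
  disj : Disjoint Qa Qr
  haltPos : ∀ w : List α,
    0 < ((projM Qa * qRun E w).trace).re + ((projM Qr * qRun E w).trace).re

/-- Acceptance probability of a single round. -/
def RestartQFA.pacc {α : Type} (M : RestartQFA α) (w : List α) : ℝ :=
  ((projM M.Qa * qRun M.E w).trace).re

/-- Rejection probability of a single round. -/
def RestartQFA.prej {α : Type} (M : RestartQFA α) (w : List α) : ℝ :=
  ((projM M.Qr * qRun M.E w).trace).re

/-- Overall acceptance probability of an RT-QFA↻: the sum over the number of
restarts of the probability of restarting that many times and then accepting. -/
def RestartQFA.fa {α : Type} (M : RestartQFA α) (w : List α) : ℝ :=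
  ∑' i : ℕ, (1 - M.pacc w - M.prej w) ^ i * M.pacc w

/-- Recognition of a language with error bound `ε`. -/
def RestartQFA.Recognizes {α : Type} (M : RestartQFA α) (L : Set (List α)) (ε : ℝ) : Prop :=
  ∀ w : List α, (w ∈ L → 1 - ε ≤ M.fa w) ∧ (w ∉ L → M.fa w ≤ ε)

/-- The class of languages recognized by RT-QFA↻s with bounded error. -/
def RestartQAL {α : Type} (L : Set (List α)) : Prop :=
  ∃ (M : RestartQFA α) (ε : ℝ), 0 ≤ ε ∧ ε < 1 / 2 ∧ M.Recognizes L ε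

/-! The final density matrix of a run has trace one and nonnegative diagonal, so the accepting
and rejecting probabilities `p, q` of one round satisfy `0 < p + q ≤ 1`. The restarting machine
therefore accepts with probability `∑ (1 - p - q) ^ i * p = p / (p + q)`, which is exactly the
postselected acceptance probability of the same data read as an RT-PostQFA. -/

open scoped ComplexOrder Matrix

section Kraus

variable {R ι m : Type*} [CommRing R] [StarRing R] [Fintype ι] [Fintype m]

theorem Matrix.PosSemidef.sum_mul_mul_conjTranspose [PartialOrder R] [StarOrderedRing R]
    {ρ : Matrix m m R} (hρ : ρ.PosSemidef) (E : ι → Matrix m m R) :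
    (∑ i, E i * ρ * (E i)ᴴ).PosSemidef :=
  Matrix.posSemidef_sum _ fun i _ => hρ.mul_mul_conjTranspose_same (E i)

theorem Matrix.trace_sum_mul_mul_conjTranspose [DecidableEq m] {E : ι → Matrix m m R}
    (hE : ∑ i, (E i)ᴴ * E i = 1) (ρ : Matrix m m R) :
    (∑ i, E i * ρ * (E i)ᴴ).trace = ρ.trace := by
  calc (∑ i, E i * ρ * (E i)ᴴ).trace
      = ∑ i, ((E i)ᴴ * E i * ρ).trace := by
        rw [Matrix.trace_sum]
        exact Finset.sum_congr rfl fun i _ => Matrix.trace_mul_cycle (E i) ρ _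
    _ = ρ.trace := by rw [← Matrix.trace_sum, ← Finset.sum_mul, hE, one_mul]

variable {β : Type*} {k : β → ℕ}

theorem Matrix.PosSemidef.foldl_kraus [PartialOrder R] [StarOrderedRing R]
    (E : ∀ σ, Fin (k σ) → Matrix m m R) (l : List β)
    {ρ : Matrix m m R} (hρ : ρ.PosSemidef) :
    (l.foldl (fun ρ σ => ∑ i, E σ i * ρ * (E σ i)ᴴ) ρ).PosSemidef := by
  induction l generalizing ρ with
  | nil => exact hρ
  | cons σ l ih => exact ih (hρ.sum_mul_mul_conjTranspose (E σ))

theorem Matrix.trace_foldl_kraus [DecidableEq m] {E : ∀ σ, Fin (k σ) → Matrix m m R}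
    (hE : ∀ σ, ∑ i, (E σ i)ᴴ * E σ i = 1) (l : List β) (ρ : Matrix m m R) :
    (l.foldl (fun ρ σ => ∑ i, E σ i * ρ * (E σ i)ᴴ) ρ).trace = ρ.trace := by
  induction l generalizing ρ with
  | nil => rfl
  | cons σ l ih => exact (ih _).trans (Matrix.trace_sum_mul_mul_conjTranspose (hE σ) ρ)

end Kraus

section Run

variable {α : Type} {n : ℕ} {k : ESym α → ℕ}

theorem qRun_posSemidef
    (E : ∀ σ : ESym α, Fin (k σ) → Matrix (Fin (n + 1)) (Fin (n + 1)) ℂ) (w : List α) :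
    (qRun E w).PosSemidef := by
  refine Matrix.PosSemidef.foldl_kraus E _ ?_
  rw [← Matrix.diagonal_single, Matrix.posSemidef_diagonal_iff]
  intro i
  by_cases hi : i = 0 <;> simp [hi]

theorem qRun_trace {E : ∀ σ : ESym α, Fin (k σ) → Matrix (Fin (n + 1)) (Fin (n + 1)) ℂ}
    (hE : ∀ σ, ∑ i, (E σ i)ᴴ * E σ i = 1) (w : List α) : (qRun E w).trace = 1 := by
  rw [qRun, Matrix.trace_foldl_kraus hE, Matrix.trace_single_eq_same]

end Run

section Projection

variable {m : ℕ}

theorem re_trace_projM_mul (S : Finset (Fin m)) (ρ : Matrix (Fin m) (Fin m) ℂ) :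
    (projM S * ρ).trace.re = ∑ i ∈ S, (ρ i i).re := by
  simp [Matrix.trace, projM, Matrix.diagonal_mul, ite_mul, Finset.sum_ite_mem, Complex.re_sum]

theorem re_trace_projM_mul_add_le_one {S T : Finset (Fin m)} (hST : Disjoint S T)
    {ρ : Matrix (Fin m) (Fin m) ℂ} (hρ : ρ.PosSemidef) (htr : ρ.trace = 1) :
    (projM S * ρ).trace.re + (projM T * ρ).trace.re ≤ 1 := by
  have hdiag : ∀ i, 0 ≤ (ρ i i).re := fun i => (Complex.nonneg_iff.1 hρ.diag_nonneg).1
  calc (projM S * ρ).trace.re + (projM T * ρ).trace.re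
      = ∑ i ∈ S ∪ T, (ρ i i).re := by
        rw [re_trace_projM_mul, re_trace_projM_mul, Finset.sum_union hST]
    _ ≤ ∑ i, (ρ i i).re := Finset.sum_le_sum_of_subset_of_nonneg (Finset.subset_univ _)
        fun i _ _ => hdiag i
    _ = 1 := by simpa [Matrix.trace, Complex.re_sum] using congrArg Complex.re htr

end Projection

theorem tsum_one_sub_sub_pow_mul {p q : ℝ} (hpos : 0 < p + q) (hle : p + q ≤ 1) :
    ∑' i : ℕ, (1 - p - q) ^ i * p = p / (p + q) := by
  rw [tsum_mul_right, tsum_geometric_of_lt_one (by linarith) (by linarith),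
    show 1 - (1 - p - q) = p + q by ring, div_eq_inv_mul]

variable {α : Type}

namespace RestartQFA

theorem pacc_add_prej_le_one (M : RestartQFA α) (w : List α) : M.pacc w + M.prej w ≤ 1 :=
  re_trace_projM_mul_add_le_one M.disj (qRun_posSemidef M.E w) (qRun_trace M.kraus w)

theorem fa_eq_div (M : RestartQFA α) (w : List α) :
    M.fa w = M.pacc w / (M.pacc w + M.prej w) :=
  tsum_one_sub_sub_pow_mul (M.haltPos w) (M.pacc_add_prej_le_one w)

def toPostQFA (M : RestartQFA α) : PostQFA α :=
  ⟨M.n, M.k, M.E, M.kraus, M.Qa, M.Qr, M.disj, M.haltPos⟩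

theorem toPostQFA_recognizes_iff (M : RestartQFA α) (L : Set (List α)) (ε : ℝ) :
    M.toPostQFA.Recognizes L ε ↔ M.Recognizes L ε := by
  have hfa : M.toPostQFA.fa = M.fa := funext fun w => (M.fa_eq_div w).symm
  rw [PostQFA.Recognizes, RestartQFA.Recognizes, hfa]

end RestartQFA

namespace PostQFA

def toRestartQFA (M : PostQFA α) : RestartQFA α :=
  ⟨M.n, M.k, M.E, M.kraus, M.Qpa, M.Qpr, M.disj, M.postPos⟩

theorem toRestartQFA_recognizes_iff (M : PostQFA α) (L : Set (List α)) (ε : ℝ) :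
    M.toRestartQFA.Recognizes L ε ↔ M.Recognizes L ε := by
  have hfa : M.toRestartQFA.fa = M.fa := funext M.toRestartQFA.fa_eq_div
  rw [PostQFA.Recognizes, RestartQFA.Recognizes, hfa]

end PostQFA

theorem exists_restartQFA_recognizes_iff (L : Set (List α)) (ε : ℝ) :
    (∃ M : RestartQFA α, M.Recognizes L ε) ↔ ∃ M : PostQFA α, M.Recognizes L ε :=
  ⟨fun ⟨M, hM⟩ => ⟨M.toPostQFA, (M.toPostQFA_recognizes_iff L ε).2 hM⟩,
    fun ⟨M, hM⟩ => ⟨M.toRestartQFA, (M.toRestartQFA_recognizes_iff L ε).2 hM⟩⟩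

theorem restartQAL_iff_postQAL (L : Set (List α)) : RestartQAL L ↔ PostQAL L := by
  rw [RestartQAL, PostQAL, exists_comm, exists_comm (α := PostQFA α)]
  simp only [exists_and_left, exists_restartQFA_recognizes_iff]

theorem restartQFA_iff_postQFA_general (α : Type) :
    (∀ (L : Set (List α)) (ε : ℝ), 0 ≤ ε → ε < 1 / 2 →
      ((∃ M : RestartQFA α, M.Recognizes L ε) ↔ (∃ M : PostQFA α, M.Recognizes L ε))) ∧
      {L : Set (List α) | RestartQAL L} = {L : Set (List α) | PostQAL L} :=
  ⟨fun L ε _ _ => exists_restartQFA_recognizes_iff L ε, Set.ext restartQAL_iff_postQAL⟩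

/-- A language is recognized with error bound `ε` by some RT-QFA↻ iff it is
recognized with error bound `ε` by some RT-PostQFA; in particular the class of
languages recognized by RT-QFA↻s with bounded error equals `PostQAL`. -/
theorem restartQFA_iff_postQFA (α : Type) [Fintype α] :
    (∀ (L : Set (List α)) (ε : ℝ), 0 ≤ ε → ε < 1 / 2 →
      ((∃ M : RestartQFA α, M.Recognizes L ε) ↔ (∃ M : PostQFA α, M.Recognizes L ε))) ∧
      {L : Set (List α) | RestartQAL L} = {L : Set (List α) | PostQAL L} :=
  restartQFA_iff_postQFA_general α
end
end

section
/- ZPostQAL ⊆ NQAL ∩ coNQAL: if L ⊆ Σ* is recognized with error bound 0 by some RT-PostQFA, then there is an RT-QFA whose acceptance probability is positive exactly on the members of L, and there is an RT-QFA whose acceptance probability is positive exactly on the non-members of L. -/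
noncomputable section

/-- A standard real-time quantum finite automaton (RT-QFA). -/
structure QFA (α : Type) where
  n : ℕ
  k : ESym α → ℕ
  E : ∀ σ : ESym α, Fin (k σ) → Matrix (Fin (n + 1)) (Fin (n + 1)) ℂ
  kraus : ∀ σ : ESym α, ∑ i : Fin (k σ), (E σ i).conjTranspose * E σ i = 1
  Qa : Finset (Fin (n + 1))

/-- Acceptance probability of an RT-QFA. -/
def QFA.fa {α : Type} (M : QFA α) (w : List α) : ℝ :=
  ((projM M.Qa * qRun M.E w).trace).re

/-!
With zero error, postselection gives `p^a(w) > 0 = p^r(w)` on members of `L` and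
`p^a(w) = 0 < p^r(w)` on non-members (since `p^a + p^r > 0`). Hence the same Kraus
data with `Q_pa` as accepting states accepts exactly `L` with positive probability.
Exchanging `Q_pa` and `Q_pr` recognizes `Lᶜ` with zero error, which gives the complement.
-/

variable {α : Type}

def NQAL (L : Set (List α)) : Prop :=
  ∃ M : QFA α, L = {w : List α | 0 < M.fa w}

namespace PostQFA

variable (M : PostQFA α) (w : List α)

lemma pacc_add_prej_pos : 0 < M.pacc w + M.prej w :=
  M.postPos w

lemma fa_eq_one_iff : M.fa w = 1 ↔ M.prej w = 0 := by
  rw [fa, div_eq_one_iff_eq (M.pacc_add_prej_pos w).ne']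
  constructor <;> intro h <;> linarith

lemma fa_eq_zero_iff : M.fa w = 0 ↔ M.pacc w = 0 := by
  rw [fa, div_eq_zero_iff, or_iff_left (M.pacc_add_prej_pos w).ne']

def swap : PostQFA α where
  n := M.n
  k := M.k
  E := M.E
  kraus := M.kraus
  Qpa := M.Qpr
  Qpr := M.Qpa
  disj := M.disj.symm
  postPos w := add_comm (M.pacc w) (M.prej w) ▸ M.pacc_add_prej_pos w

@[simp] lemma swap_pacc : M.swap.pacc w = M.prej w := rfl

@[simp] lemma swap_prej : M.swap.prej w = M.pacc w := rfl

def toAcceptQFA : QFA α :=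
  ⟨M.n, M.k, M.E, M.kraus, M.Qpa⟩

@[simp] lemma toAcceptQFA_fa : M.toAcceptQFA.fa w = M.pacc w := rfl

variable {M} {L : Set (List α)}

lemma RecognizesZero.swap (hM : M.RecognizesZero L) : M.swap.RecognizesZero Lᶜ := by
  refine fun w => ⟨fun hw => ?_, fun hw => ?_⟩
  · rw [fa_eq_one_iff, swap_prej, ← fa_eq_zero_iff]
    exact (hM w).2 hw
  · rw [fa_eq_zero_iff, swap_pacc, ← fa_eq_one_iff]
    exact (hM w).1 (Set.not_notMem.1 hw)

lemma RecognizesZero.mem_iff_pacc_pos (hM : M.RecognizesZero L) (w : List α) :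
    w ∈ L ↔ 0 < M.pacc w := by
  by_cases hw : w ∈ L
  · have hprej : M.prej w = 0 := (M.fa_eq_one_iff w).1 ((hM w).1 hw)
    simpa [hw, hprej] using M.pacc_add_prej_pos w
  · simp [hw, (M.fa_eq_zero_iff w).1 ((hM w).2 hw)]

end PostQFA

lemma ZPostQAL.compl {L : Set (List α)} (hL : ZPostQAL L) : ZPostQAL Lᶜ :=
  let ⟨M, hM⟩ := hL
  ⟨M.swap, hM.swap⟩

lemma ZPostQAL.nqal {L : Set (List α)} (hL : ZPostQAL L) : NQAL L := by
  obtain ⟨M, hM⟩ := hL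
  exact ⟨M.toAcceptQFA, Set.ext fun w => by simpa using hM.mem_iff_pacc_pos w⟩

theorem ZPostQAL_subset_NQAL_inter_coNQAL_general {α : Type} (L : Set (List α))
    (hL : ZPostQAL L) :
    (∃ M : QFA α, L = {w : List α | 0 < M.fa w}) ∧
      (∃ M : QFA α, Lᶜ = {w : List α | 0 < M.fa w}) :=
  ⟨hL.nqal, hL.compl.nqal⟩

/-- `ZPostQAL ⊆ NQAL ∩ coNQAL`: a language recognized with zero error by an
RT-PostQFA is recognized with cutpoint zero by some RT-QFA, and so is its complement. -/
theorem ZPostQAL_subset_NQAL_inter_coNQAL {α : Type} [Fintype α] (L : Set (List α))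
    (hL : ZPostQAL L) :
    (∃ M : QFA α, L = {w : List α | 0 < M.fa w}) ∧
      (∃ M : QFA α, Lᶜ = {w : List α | 0 < M.fa w}) :=
  ZPostQAL_subset_NQAL_inter_coNQAL_general L hL
end
end
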